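/- arXiv:1210.8298 — 2 statements merged into one kernel-verified Lean document; each statement's English description precedes it below -/
import Mathlib

section
/- Let N and H be nontrivial finite groups and let φ : H → Aut(N) be a homomorphism defining a fixed-point-free action of H on N. Then |H| divides |N| − 1; in particular, |N| and |H| are coprime. -/
/-- If `φ : H → Aut(N)` defines a fixed-point-free action of a nontrivial
finite group `H` on a nontrivial finite group `N`, then `|H|` divides `|N| - 1`; in
particular `|N|` and `|H|` are coprime. -/
theorem stmt_4 (N H : Type) [Group N] [Group H] [Fintype N] [Fintype H]
    [Nontrivial N] [Nontrivial H]
    (φ : H →* MulAut N)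
    (hfpf : ∀ h : H, h ≠ 1 → ∀ n : N, n ≠ 1 → φ h n ≠ n) :
    Fintype.card H ∣ Fintype.card N - 1 ∧
      Nat.Coprime (Fintype.card N) (Fintype.card H) := by
  classical
  letI : MulAction H {n : N // n ≠ 1} :=
    { smul := fun h x => ⟨φ h x.1, fun hc => x.2 ((φ h).injective (by simp [hc]))⟩
      one_smul := fun x => Subtype.ext (by show φ 1 x.1 = x.1; simp)
      mul_smul := fun g h x => Subtype.ext (by show φ (g*h) x.1 = φ g (φ h x.1); simp [map_mul]) }
  have hsmul : ∀ (h : H) (x : {n : N // n ≠ 1}), (h • x).1 = φ h x.1 := fun _ _ => rfl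
  have hstab : ∀ x : {n : N // n ≠ 1}, MulAction.stabilizer H x = ⊥ := by
    intro x
    ext h
    simp only [MulAction.mem_stabilizer_iff, Subgroup.mem_bot]
    constructor
    · intro hh
      by_contra hne
      exact hfpf h hne x.1 x.2 (by rw [← hsmul, hh])
    · rintro rfl; exact one_smul _ _
  have hcard : Fintype.card {n : N // n ≠ 1} = Fintype.card N - 1 := by
    simpa using Fintype.card_subtype_ne (1 : N)
  have hdvd : Fintype.card H ∣ Fintype.card N - 1 := by
    rw [← hcard,
      MulAction.card_eq_sum_card_group_div_card_stabilizer H {n : N // n ≠ 1}]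
    have hterm : ∀ ω : MulAction.orbitRel.Quotient H {n : N // n ≠ 1},
        Fintype.card H / Fintype.card (MulAction.stabilizer H ω.out) = Fintype.card H := by
      intro ω
      have h1 : Fintype.card (MulAction.stabilizer H (Quotient.out ω)) = 1 := by
        rw [Fintype.card_eq_one_iff]
        refine ⟨⟨1, Subgroup.one_mem _⟩, fun y => ?_⟩
        have hy : (y : H) ∈ (⊥ : Subgroup H) := (hstab (Quotient.out ω)) ▸ y.2
        ext
        simpa using hy
      rw [h1, Nat.div_one]
    rw [Finset.sum_congr rfl (fun ω _ => hterm ω), Finset.sum_const, smul_eq_mul]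
    exact Dvd.intro_left _ rfl
  refine ⟨hdvd, ?_⟩
  obtain ⟨c, hc⟩ := hdvd
  have h1 : 1 ≤ Fintype.card N := Fintype.card_pos
  have hc' : Fintype.card N - 1 = c * Fintype.card H := by rw [hc, mul_comm]
  have h2 : Fintype.card N = 1 + c * Fintype.card H := by omega
  rw [h2]
  exact (Nat.coprime_add_mul_right_left 1 (Fintype.card H) c).mpr (Nat.coprime_one_left _)
end

section
/- Let G be a finite group with nontrivial subgroups N and H such that N is normal in G, G = NH, N ∩ H = {1}, and hnh⁻¹ ≠ n for all h ∈ H ∖ {1} and n ∈ N ∖ {1}. Then every normal subgroup K of G satisfies K ≤ N or N ≤ K. -/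
open scoped Pointwise

/-- If a finite group `G` is the internal semidirect product of
nontrivial subgroups `N` (normal) and `H` with `hnh⁻¹ ≠ n` for all `h ∈ H ∖ {1}`,
`n ∈ N ∖ {1}` (i.e. `G` is a Frobenius group with kernel `N`), then every normal
subgroup `K` of `G` satisfies `K ≤ N` or `N ≤ K`. -/
theorem stmt_7 (G : Type) [Group G] [Finite G] (N H : Subgroup G)
    (hNbot : N ≠ ⊥) (hHbot : H ≠ ⊥) (hN : N.Normal)
    (hsup : N ⊔ H = ⊤) (hinf : N ⊓ H = ⊥)
    (hfpf : ∀ h ∈ H, h ≠ 1 → ∀ n ∈ N, n ≠ 1 → h * n * h⁻¹ ≠ n) :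
    ∀ K : Subgroup G, K.Normal → K ≤ N ∨ N ≤ K := by
  haveI := hN
  -- Lemma A: for h ∈ H, h ≠ 1, every n ∈ N is a "twisted commutator"
  have lemA : ∀ h ∈ H, h ≠ 1 → ∀ n ∈ N, ∃ m ∈ N, h * m * h⁻¹ * m⁻¹ = n := by
    intro h hh hne n hn
    set f : N → N := fun m => ⟨h * m * h⁻¹ * (m : G)⁻¹,
      mul_mem (hN.conj_mem _ m.2 h) (inv_mem m.2)⟩ with hf
    have hinj : Function.Injective f := by
      rintro ⟨a, ha⟩ ⟨b, hb⟩ heq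
      have e : h * a * h⁻¹ * a⁻¹ = h * b * h⁻¹ * b⁻¹ := congrArg Subtype.val heq
      apply Subtype.ext
      show a = b
      have e2 : a * h⁻¹ * a⁻¹ = b * h⁻¹ * b⁻¹ := by
        apply mul_left_cancel (a := h)
        calc h * (a * h⁻¹ * a⁻¹) = h * a * h⁻¹ * a⁻¹ := by group
          _ = h * b * h⁻¹ * b⁻¹ := e
          _ = h * (b * h⁻¹ * b⁻¹) := by group
      have e3 : b⁻¹ * a * h⁻¹ = h⁻¹ * (b⁻¹ * a) := by
        calc b⁻¹ * a * h⁻¹ = b⁻¹ * (a * h⁻¹ * a⁻¹) * a := by group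
          _ = b⁻¹ * (b * h⁻¹ * b⁻¹) * a := by rw [e2]
          _ = h⁻¹ * (b⁻¹ * a) := by group
      have key : h * (b⁻¹ * a) * h⁻¹ = b⁻¹ * a := by
        calc h * (b⁻¹ * a) * h⁻¹ = h * (b⁻¹ * a * h⁻¹) := by group
          _ = h * (h⁻¹ * (b⁻¹ * a)) := by rw [e3]
          _ = b⁻¹ * a := by group
      by_contra hab
      have hx1 : b⁻¹ * a ≠ 1 := fun hc => hab (inv_mul_eq_one.mp hc).symm
      exact hfpf h hh hne _ (mul_mem (inv_mem hb) ha) hx1 key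
    obtain ⟨m, hm⟩ := Finite.surjective_of_injective hinj ⟨n, hn⟩
    exact ⟨m, m.2, congrArg Subtype.val hm⟩
  -- Lemma B: conjugation by g ∉ N fixes no nontrivial element of N
  have lemB : ∀ g : G, g ∉ N → ∀ x ∈ N, g * x * g⁻¹ = x → x = 1 := by
    intro g hg x hx hfix
    have hg' : g ∈ ((N : Set G) * (H : Set G)) := by
      rw [← Subgroup.normal_mul, hsup]; trivial
    obtain ⟨n, hn, h, hh, rfl⟩ := hg'
    have hne : h ≠ 1 := by
      rintro rfl
      exact hg (by simpa using hn)
    obtain ⟨m, hm, hcm⟩ := lemA h hh hne n⁻¹ (inv_mem hn)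
    by_contra hx1
    have hy : m⁻¹ * x * m ∈ N := mul_mem (mul_mem (inv_mem hm) hx) hm
    have hy1 : m⁻¹ * x * m ≠ 1 := by
      intro hc
      apply hx1
      have e0 : x = m * (m⁻¹ * x * m) * m⁻¹ := by group
      rw [hc] at e0
      simpa using e0
    apply hfpf h hh hne _ hy hy1
    have hfix' : h * x * h⁻¹ = n⁻¹ * x * n := by
      have e0 : n * (h * x * h⁻¹) * n⁻¹ = x := by
        calc n * (h * x * h⁻¹) * n⁻¹ = (n * h) * x * (n * h)⁻¹ := by group
          _ = x := hfix
      calc h * x * h⁻¹ = n⁻¹ * (n * (h * x * h⁻¹) * n⁻¹) * n := by group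
        _ = n⁻¹ * x * n := by rw [e0]
    have hn' : n = m * h * m⁻¹ * h⁻¹ := by
      have e1 : n = (h * m * h⁻¹ * m⁻¹)⁻¹ := by rw [hcm, inv_inv]
      rw [e1]; group
    have e4 : h * x * h⁻¹ = (h * m * h⁻¹ * m⁻¹) * x * (m * h * m⁻¹ * h⁻¹) := by
      rw [hfix', hcm, ← hn']
    have e5 : x = m * h⁻¹ * m⁻¹ * x * m * h * m⁻¹ := by
      calc x = h⁻¹ * (h * x * h⁻¹) * h := by group
        _ = h⁻¹ * ((h * m * h⁻¹ * m⁻¹) * x * (m * h * m⁻¹ * h⁻¹)) * h := by rw [e4]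
        _ = m * h⁻¹ * m⁻¹ * x * m * h * m⁻¹ := by group
    calc h * (m⁻¹ * x * m) * h⁻¹
        = h * (m⁻¹ * (m * h⁻¹ * m⁻¹ * x * m * h * m⁻¹) * m) * h⁻¹ := by rw [← e5]
      _ = m⁻¹ * x * m := by group
  -- Main argument
  intro K hK
  by_cases hle : K ≤ N
  · exact Or.inl hle
  · right
    obtain ⟨g, hgK, hgN⟩ := SetLike.not_le_iff_exists.mp hle
    set c : N → ↥(N ⊓ K) := fun m => ⟨(m : G)⁻¹ * g * m * g⁻¹, by
      refine Subgroup.mem_inf.mpr ⟨?_, ?_⟩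
      · have e : ((m : G)⁻¹ * g * m * g⁻¹ : G) = (m : G)⁻¹ * (g * m * g⁻¹) := by group
        rw [e]
        exact mul_mem (inv_mem m.2) (hN.conj_mem _ m.2 g)
      · have e : ((m : G)⁻¹ * g * m * g⁻¹ : G) = ((m : G)⁻¹ * g * ((m : G)⁻¹)⁻¹) * g⁻¹ := by
          group
        rw [e]
        exact mul_mem (hK.conj_mem _ hgK _) (inv_mem hgK)⟩ with hc
    have hcinj : Function.Injective c := by
      rintro ⟨a, ha⟩ ⟨b, hb⟩ heq
      have e : a⁻¹ * g * a * g⁻¹ = b⁻¹ * g * b * g⁻¹ := congrArg Subtype.val heq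
      apply Subtype.ext
      show a = b
      have e1 : a⁻¹ * g * a = b⁻¹ * g * b := mul_right_cancel e
      have e2 : g * (b * a⁻¹) * g⁻¹ = b * a⁻¹ := by
        calc g * (b * a⁻¹) * g⁻¹
            = b * (b⁻¹ * g * b) * a⁻¹ * g⁻¹ := by group
          _ = b * (a⁻¹ * g * a) * a⁻¹ * g⁻¹ := by rw [e1]
          _ = b * a⁻¹ := by group
      have := lemB g hgN _ (mul_mem hb (inv_mem ha)) e2
      exact (mul_inv_eq_one.mp this).symm
    have hcard : Nat.card N ≤ Nat.card ↥(N ⊓ K) := Nat.card_le_card_of_injective c hcinj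
    have heq : N ⊓ K = N := Subgroup.eq_of_le_of_card_ge inf_le_left hcard
    rw [← heq]
    exact inf_le_right
end
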